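/- (Joint convexity) For probability distributions p1, q1, p2, q2 on a finite set with all entries positive, λ ∈ [0,1], and parameters 0 < k ≤ 1/2, r real, the generalized Tsallis relative entropy satisfies D_{k,r}((1-λ)p1 + λp2 || (1-λ)q1 + λq2) ≤ (1-λ) D_{k,r}(p1||q1) + λ D_{k,r}(p2||q2). -/

import Mathlib

/-- Two-parameter deformed logarithm: `ln_{k,r}(x) = (x^(2k) - 1) / (2k x^(r+k))`. -/
noncomputable def lnkr (k r x : ℝ) : ℝ := (x ^ (2 * k) - 1) / (2 * k * x ^ (r + k))

/-- Generalized Tsallis relative entropy `D_{k,r}(p‖q)`. -/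
noncomputable def Dkr {X : Type*} [Fintype X] (k r : ℝ) (p q : X → ℝ) : ℝ :=
  ∑ x, p x * (p x / q x) ^ (r - k) * lnkr k r (p x / q x)

/-!
Writing `t = a / b`, each summand of `D_{k,r}` is `b * g(t)` with
`g(t) = t * t^(r-k) * ln_{k,r}(t) = (t - t^(1-2k)) / (2k)`, in which `r` cancels. For
`0 < k ≤ 1/2` the function `g` is convex, since `t ↦ t^(1-2k)` is concave. The perspective
`(a, b) ↦ b * g(a / b)` of a convex function is jointly convex (by homogeneity this is the
generalized log-sum inequality), and summing over `x` gives the theorem.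
-/

open Real Set

theorem ConvexOn.perspective_le {s : Set ℝ} {f : ℝ → ℝ} (hf : ConvexOn ℝ s f)
    {a₁ b₁ a₂ b₂ μ ν : ℝ} (h₁ : a₁ / b₁ ∈ s) (h₂ : a₂ / b₂ ∈ s) (hb₁ : 0 < b₁) (hb₂ : 0 < b₂)
    (hμ : 0 ≤ μ) (hν : 0 ≤ ν) (hμν : μ + ν = 1) :
    (μ * b₁ + ν * b₂) * f ((μ * a₁ + ν * a₂) / (μ * b₁ + ν * b₂)) ≤
      μ * (b₁ * f (a₁ / b₁)) + ν * (b₂ * f (a₂ / b₂)) := by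
  have hB : 0 < μ * b₁ + ν * b₂ := by
    rcases hμ.eq_or_lt with rfl | hμ
    · simp_all
    · positivity
  have hjensen := hf.2 h₁ h₂ (div_nonneg (mul_nonneg hμ hb₁.le) hB.le)
    (div_nonneg (mul_nonneg hν hb₂.le) hB.le) (by field_simp)
  simp only [smul_eq_mul] at hjensen
  have hpoint : μ * b₁ / (μ * b₁ + ν * b₂) * (a₁ / b₁) + ν * b₂ / (μ * b₁ + ν * b₂) * (a₂ / b₂) =
      (μ * a₁ + ν * a₂) / (μ * b₁ + ν * b₂) := by
    field_simp
  rw [hpoint] at hjensen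
  calc (μ * b₁ + ν * b₂) * f ((μ * a₁ + ν * a₂) / (μ * b₁ + ν * b₂))
      ≤ (μ * b₁ + ν * b₂) * (μ * b₁ / (μ * b₁ + ν * b₂) * f (a₁ / b₁) +
          ν * b₂ / (μ * b₁ + ν * b₂) * f (a₂ / b₂)) := mul_le_mul_of_nonneg_left hjensen hB.le
    _ = μ * (b₁ * f (a₁ / b₁)) + ν * (b₂ * f (a₂ / b₂)) := by
      field_simp

theorem convexOn_sub_rpow_div {k : ℝ} (hk₀ : 0 < k) (hk : k ≤ 1 / 2) :
    ConvexOn ℝ (Ici 0) fun t : ℝ => (t - t ^ (1 - 2 * k)) / (2 * k) := by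
  refine (((convexOn_id (convex_Ici 0)).sub
    (concaveOn_rpow (by linarith : (0 : ℝ) ≤ 1 - 2 * k) (by linarith))).smul
      (inv_nonneg.2 (by positivity : (0 : ℝ) ≤ 2 * k))).congr fun t _ => ?_
  simp only [Pi.sub_apply, id, smul_eq_mul]
  ring

theorem mul_rpow_mul_lnkr {k : ℝ} (r : ℝ) (hk : k ≠ 0) {t : ℝ} (ht : 0 < t) :
    t * t ^ (r - k) * lnkr k r t = (t - t ^ (1 - 2 * k)) / (2 * k) := by
  have hrk : t ^ (r + k) = t ^ (r - k) * t ^ (2 * k) := by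
    rw [← rpow_add ht]; ring_nf
  have h2k : t ^ (1 - 2 * k) = t / t ^ (2 * k) := by
    rw [rpow_sub ht, rpow_one]
  have : 0 < t ^ (r - k) := rpow_pos_of_pos ht _
  have : 0 < t ^ (2 * k) := rpow_pos_of_pos ht _
  rw [lnkr, hrk, h2k]
  field_simp

theorem Dkr_eq_sum_mul {X : Type*} [Fintype X] {k : ℝ} (r : ℝ) (hk : k ≠ 0) {p q : X → ℝ}
    (hp : ∀ x, 0 < p x) (hq : ∀ x, 0 < q x) :
    Dkr k r p q = ∑ x, q x * ((p x / q x - (p x / q x) ^ (1 - 2 * k)) / (2 * k)) := by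
  refine Finset.sum_congr rfl fun x _ => ?_
  rw [← mul_rpow_mul_lnkr r hk (div_pos (hp x) (hq x))]
  nth_rewrite 1 [← mul_div_cancel₀ (p x) (hq x).ne']
  ring

theorem joint_convexity_general {X : Type*} [Fintype X] (p₁ q₁ p₂ q₂ : X → ℝ)
    (hp₁ : ∀ x, 0 < p₁ x) (hq₁ : ∀ x, 0 < q₁ x) (hp₂ : ∀ x, 0 < p₂ x) (hq₂ : ∀ x, 0 < q₂ x)
    (lam : ℝ) (hlam0 : 0 ≤ lam) (hlam1 : lam ≤ 1)
    (k r : ℝ) (hk0 : 0 < k) (hk : k ≤ 1 / 2) :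
    Dkr k r (fun x => (1 - lam) * p₁ x + lam * p₂ x) (fun x => (1 - lam) * q₁ x + lam * q₂ x) ≤
      (1 - lam) * Dkr k r p₁ q₁ + lam * Dkr k r p₂ q₂ := by
  have hmix : ∀ {u v : X → ℝ}, (∀ x, 0 < u x) → (∀ x, 0 < v x) →
      ∀ x, 0 < (1 - lam) * u x + lam * v x := fun hu hv x => by
    rcases hlam0.eq_or_lt with rfl | hlam
    · simpa using hu x
    · nlinarith [hu x, hv x]
  rw [Dkr_eq_sum_mul r hk0.ne' (hmix hp₁ hp₂) (hmix hq₁ hq₂), Dkr_eq_sum_mul r hk0.ne' hp₁ hq₁,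
    Dkr_eq_sum_mul r hk0.ne' hp₂ hq₂, Finset.mul_sum, Finset.mul_sum, ← Finset.sum_add_distrib]
  refine Finset.sum_le_sum fun x _ => (convexOn_sub_rpow_div hk0 hk).perspective_le
    (div_pos (hp₁ x) (hq₁ x)).le (div_pos (hp₂ x) (hq₂ x)).le (hq₁ x) (hq₂ x)
    (by linarith) hlam0 (by ring)

theorem joint_convexity {X : Type*} [Fintype X] (p₁ q₁ p₂ q₂ : X → ℝ)
    (hp₁ : ∀ x, 0 < p₁ x) (hq₁ : ∀ x, 0 < q₁ x) (hp₂ : ∀ x, 0 < p₂ x) (hq₂ : ∀ x, 0 < q₂ x)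
    (hp₁s : ∑ x, p₁ x = 1) (hq₁s : ∑ x, q₁ x = 1) (hp₂s : ∑ x, p₂ x = 1) (hq₂s : ∑ x, q₂ x = 1)
    (lam : ℝ) (hlam0 : 0 ≤ lam) (hlam1 : lam ≤ 1)
    (k r : ℝ) (hk0 : 0 < k) (hk : k ≤ 1 / 2) :
    Dkr k r (fun x => (1 - lam) * p₁ x + lam * p₂ x) (fun x => (1 - lam) * q₁ x + lam * q₂ x) ≤
      (1 - lam) * Dkr k r p₁ q₁ + lam * Dkr k r p₂ q₂ :=
  joint_convexity_general p₁ q₁ p₂ q₂ hp₁ hq₁ hp₂ hq₂ lam hlam0 hlam1 k r hk0 hk
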